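/- Let (Ω, ℱ, ℙ) be a probability space, 𝒢 ⊆ ℱ a sub-σ-algebra, Γ : Ω → ℕ a random variable, and α > 0. Define the stopping rule γ(ω) = inf{ n ∈ ℕ : ℙ[Γ ≤ n ∣ 𝒢](ω) ≥ α/(1+α) } (with γ = ∞ if no such n exists, using a fixed version of the conditional distribution of Γ given 𝒢). Then γ is 𝒢-measurable and ℙ({γ < ∞} ∩ {Γ > γ}) ≤ 1/(1+α); that is, the test which declares a change at the smallest time n at which the posterior probability ℙ(Γ ≤ n ∣ data) reaches α/(1+α) has probability of false alarm at most 1/(1+α). -/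

import Mathlib

open MeasureTheory ProbabilityTheory

private lemma aux_bound {Ω : Type*} {G F : MeasurableSpace Ω} (hG : G ≤ F)
    (μ : Measure Ω) [IsProbabilityMeasure μ] (S A : Set Ω)
    (hS : MeasurableSet[F] S) (hA : MeasurableSet[G] A) (c : ℝ)
    (hpt : ∀ x ∈ A, c ≤ (μ[S.indicator (fun _ => (1:ℝ))|G]) x) :
    c * (μ A).toReal ≤ (μ (S ∩ A)).toReal := by
  have hS' : MeasurableSet S := hS
  have hA' : MeasurableSet A := hG _ hA
  have hind : Integrable (S.indicator fun _ => (1:ℝ)) μ := (integrable_const 1).indicator hS'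
  have h1 : ∫ x in A, (μ[S.indicator (fun _ => (1:ℝ))|G]) x ∂μ
      = ∫ x in A, S.indicator (fun _ => (1:ℝ)) x ∂μ := setIntegral_condExp hG hind hA
  have h2 : ∫ x in A, S.indicator (fun _ => (1:ℝ)) x ∂μ = (μ (S ∩ A)).toReal := by
    rw [integral_indicator_const (1:ℝ) hS', measureReal_def, Measure.restrict_apply hS', smul_eq_mul, mul_one]
  calc c * (μ A).toReal
      ≤ ∫ x in A, (μ[S.indicator (fun _ => (1:ℝ))|G]) x ∂μ :=
        setIntegral_ge_of_const_le_real hA' (measure_ne_top μ A) hpt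
          integrable_condExp.integrableOn
    _ = (μ (S ∩ A)).toReal := h1.trans h2


/-- The HQCD posterior-threshold stopping rule
`γ(ω) = inf { n : ℙ[Γ ≤ n ∣ G](ω) ≥ α/(1+α) }` (with `γ = ∞` if no such `n` exists,
using the fixed version `μ⟦·|G⟧` of the conditional probability) is `G`-measurable and
its probability of false alarm `ℙ({γ < ∞} ∩ {Γ > γ})` is at most `1/(1+α)`. -/
theorem posterior_threshold_test_pfa
    {Ω : Type*} (G : MeasurableSpace Ω) {F : MeasurableSpace Ω} (μ : Measure Ω) [IsProbabilityMeasure μ]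
    (hG : G ≤ F)
    (Γ : Ω → ℕ) (hΓ : Measurable Γ)
    (α : ℝ) (hα : 0 < α)
    (γ : Ω → ℕ∞)
    (hγdef : ∀ ω, γ ω = sInf {m : ℕ∞ | ∃ n : ℕ, m = (n : ℕ∞) ∧
        α / (1 + α) ≤ (μ⟦{ω' | Γ ω' ≤ n} | G⟧) ω}) :
    Measurable[G] γ ∧
      (μ {ω | γ ω < ⊤ ∧ γ ω < (Γ ω : ℕ∞)}).toReal ≤ 1 / (1 + α) := by
  have h1α : (0:ℝ) < 1 + α := by linarith
  set c : ℝ := α / (1 + α) with hc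
  set f : ℕ → Ω → ℝ := fun n => μ⟦{ω' | Γ ω' ≤ n} | G⟧ with hf
  set P : Ω → ℕ → Prop := fun ω n => c ≤ f n ω with hP
  -- characterization of γ
  have hγtop : ∀ ω, γ ω = ⊤ ↔ ∀ n, ¬ P ω n := by
    intro ω
    rw [hγdef ω, sInf_eq_top]
    constructor
    · intro h n hn
      exact absurd (h (n : ℕ∞) ⟨n, rfl, hn⟩) (by simp)
    · intro h m hm
      obtain ⟨n, rfl, hn⟩ := hm
      exact absurd hn (h n)
  have hγn : ∀ ω (n : ℕ), γ ω = (n : ℕ∞) ↔ (P ω n ∧ ∀ k < n, ¬ P ω k) := by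
    intro ω n
    rw [hγdef ω]
    constructor
    · intro h
      have hne : {m : ℕ∞ | ∃ k : ℕ, m = (k : ℕ∞) ∧ P ω k}.Nonempty := by
        by_contra hemp
        rw [Set.not_nonempty_iff_eq_empty] at hemp
        rw [hemp, sInf_empty] at h
        simp at h
      have hmem : (n : ℕ∞) ∈ {m : ℕ∞ | ∃ k : ℕ, m = (k : ℕ∞) ∧ P ω k} := by
        rw [← h]
        -- sInf of a nonempty set of casts of naturals is a member
        obtain ⟨m, k, rfl, hk⟩ := hne
        have : sInf {m : ℕ∞ | ∃ k : ℕ, m = (k : ℕ∞) ∧ P ω k} ≤ (k : ℕ∞) :=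
          sInf_le ⟨k, rfl, hk⟩
        -- the set is a set in ℕ∞; use well-ordering via Nat.find
        have hex : ∃ j : ℕ, P ω j := ⟨k, hk⟩
        have : sInf {m : ℕ∞ | ∃ k : ℕ, m = (k : ℕ∞) ∧ P ω k}
            = ((Nat.find hex : ℕ) : ℕ∞) := by
          apply le_antisymm
          · exact sInf_le ⟨Nat.find hex, rfl, Nat.find_spec hex⟩
          · apply le_sInf
            intro b hb
            obtain ⟨j, rfl, hj⟩ := hb
            exact_mod_cast Nat.find_min' hex hj
        rw [this]
        exact ⟨Nat.find hex, rfl, Nat.find_spec hex⟩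
      obtain ⟨k, hk, hPk⟩ := hmem
      have : k = n := by exact_mod_cast hk.symm
      subst this
      refine ⟨hPk, ?_⟩
      intro j hj hPj
      have := sInf_le (show ((j:ℕ∞)) ∈ {m : ℕ∞ | ∃ k : ℕ, m = (k : ℕ∞) ∧ P ω k}
        from ⟨j, rfl, hPj⟩)
      rw [h] at this
      exact absurd (by exact_mod_cast this) (not_le.mpr hj)
    · rintro ⟨hn, hlt⟩
      apply le_antisymm
      · exact sInf_le ⟨n, rfl, hn⟩
      · apply le_sInf
        rintro b ⟨j, rfl, hj⟩
        by_contra hb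
        push_neg at hb
        have hjn : j < n := by exact_mod_cast hb
        exact hlt j hjn hj
  -- measurability pieces
  have hfmeas : ∀ n, Measurable[G] (f n) := fun n =>
    stronglyMeasurable_condExp.measurable
  have hAmeasG : ∀ n : ℕ, MeasurableSet[G] {ω | γ ω = (n : ℕ∞)} := by
    intro n
    have : {ω | γ ω = (n : ℕ∞)} =
        {ω | P ω n} ∩ ⋂ k ∈ Finset.range n, {ω | ¬ P ω k} := by
      ext ω
      simp only [Set.mem_setOf_eq, Set.mem_inter_iff, Set.mem_iInter, Finset.mem_range,
        hγn ω n]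
    rw [this]
    refine MeasurableSet.inter ?_ ?_
    · exact measurableSet_le measurable_const (hfmeas n)
    · refine MeasurableSet.biInter (Set.to_countable _) fun k _ => ?_
      exact (measurableSet_le measurable_const (hfmeas k)).compl
  have hmeasγ : Measurable[G] γ := by
    refine @measurable_to_countable' ℕ∞ Ω _ _ G γ ?_
    intro y
    cases y with
    | top =>
      have : γ ⁻¹' {⊤} = ⋂ n : ℕ, {ω | ¬ P ω n} := by
        ext ω
        simp only [Set.mem_preimage, Set.mem_singleton_iff, Set.mem_iInter, Set.mem_setOf_eq,
          hγtop ω]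
      rw [this]
      exact MeasurableSet.iInter fun n =>
        (measurableSet_le measurable_const (hfmeas n)).compl
    | coe n =>
      exact hAmeasG n
  refine ⟨hmeasγ, ?_⟩
  -- the false alarm event decomposes
  set A : ℕ → Set Ω := fun n => {ω | γ ω = (n : ℕ∞)} with hA
  set B : ℕ → Set Ω := fun n => A n ∩ {ω | n < Γ ω} with hB
  have hAmeas : ∀ n, MeasurableSet[F] (A n) := fun n => hG _ (hAmeasG n)
  have hBmeas : ∀ n, MeasurableSet[F] (B n) := fun n =>
    (hAmeas n).inter (measurableSet_lt measurable_const hΓ)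
  have hE : {ω | γ ω < ⊤ ∧ γ ω < (Γ ω : ℕ∞)} = ⋃ n : ℕ, B n := by
    ext ω
    simp only [Set.mem_setOf_eq, Set.mem_iUnion, hB, hA, Set.mem_inter_iff]
    constructor
    · rintro ⟨hlt, hΓlt⟩
      obtain ⟨n, hn⟩ : ∃ n : ℕ, γ ω = (n : ℕ∞) := by
        cases hωγ : γ ω with
        | top => rw [hωγ] at hlt; exact absurd hlt (lt_irrefl _)
        | coe n => exact ⟨n, rfl⟩
      refine ⟨n, hn, ?_⟩
      rw [hn] at hΓlt
      exact_mod_cast hΓlt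
    · rintro ⟨n, hn, hΓn⟩
      constructor
      · rw [hn]; exact WithTop.coe_lt_top n
      · rw [hn]; exact_mod_cast hΓn
  have hAdisj : Pairwise (Function.onFun Disjoint A) := by
    intro i j hij
    simp only [Function.onFun, Set.disjoint_left]
    intro ω hi hj
    exact hij (by exact_mod_cast (hi.symm.trans hj : ((i:ℕ∞)) = j))
  have hBdisj : Pairwise (Function.onFun Disjoint B) := fun i j hij =>
    ((hAdisj hij).mono Set.inter_subset_left Set.inter_subset_left)
  -- key per-n bound
  have hc01 : 0 < c ∧ c < 1 := by
    constructor
    · exact div_pos hα h1α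
    · rw [hc, div_lt_one h1α]; linarith
  have hkey : ∀ n : ℕ, μ (B n) ≤ ENNReal.ofReal (1 - c) * μ (A n) := by
    intro n
    have hfin : μ (A n) ≠ ⊤ := measure_ne_top μ _
    have hcA : c * (μ (A n)).toReal ≤ (μ ({ω' | Γ ω' ≤ n} ∩ A n)).toReal :=
      aux_bound hG μ {ω' | Γ ω' ≤ n} (A n) (hΓ measurableSet_Iic) (hAmeasG n) c
        (fun x hx => ((hγn x n).mp hx).1)
    -- so μ(A n ∩ {Γ ≤ n}) ≥ c μ(A n), hence μ(B n) ≤ (1-c) μ(A n)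
    have hsplit : μ (A n) = μ ({ω' | Γ ω' ≤ n} ∩ A n) + μ (B n) := by
      rw [hB]
      have : A n = ({ω' | Γ ω' ≤ n} ∩ A n) ∪ (A n ∩ {ω | n < Γ ω}) := by
        ext ω
        simp only [Set.mem_union, Set.mem_inter_iff, Set.mem_setOf_eq]
        constructor
        · intro h
          rcases le_or_gt (Γ ω) n with h' | h'
          · exact Or.inl ⟨h', h⟩
          · exact Or.inr ⟨h, h'⟩
        · rintro (⟨_, h⟩ | ⟨h, _⟩) <;> exact h
      rw [← measure_union (μ := μ) _ (hBmeas n)]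
      · exact congrArg μ this
      · rw [Set.disjoint_left]
        rintro ω ⟨h1, _⟩ ⟨_, h2⟩
        exact absurd (show Γ ω ≤ n from h1) (not_le.mpr h2)
    have hreal : (μ (B n)).toReal ≤ (1 - c) * (μ (A n)).toReal := by
      have h1 : (μ (A n)).toReal = (μ ({ω' | Γ ω' ≤ n} ∩ A n)).toReal + (μ (B n)).toReal := by
        rw [hsplit, ENNReal.toReal_add (measure_ne_top μ _) (measure_ne_top μ _)]
      nlinarith [hcA, ENNReal.toReal_nonneg (a := μ (A n))]
    calc μ (B n) = ENNReal.ofReal ((μ (B n)).toReal) := by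
          rw [ENNReal.ofReal_toReal (measure_ne_top μ _)]
      _ ≤ ENNReal.ofReal ((1 - c) * (μ (A n)).toReal) := ENNReal.ofReal_le_ofReal hreal
      _ = ENNReal.ofReal (1 - c) * μ (A n) := by
          rw [ENNReal.ofReal_mul (by linarith [hc01.2]), ENNReal.ofReal_toReal
            (measure_ne_top μ _)]
  -- sum up
  have hsum : μ {ω | γ ω < ⊤ ∧ γ ω < (Γ ω : ℕ∞)} ≤ ENNReal.ofReal (1 - c) := by
    rw [hE, measure_iUnion (μ := μ) hBdisj hBmeas]
    calc ∑' n, μ (B n) ≤ ∑' n, ENNReal.ofReal (1 - c) * μ (A n) :=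
          ENNReal.tsum_le_tsum hkey
      _ = ENNReal.ofReal (1 - c) * ∑' n, μ (A n) := ENNReal.tsum_mul_left
      _ = ENNReal.ofReal (1 - c) * μ (⋃ n, A n) := by
          rw [measure_iUnion (μ := μ) hAdisj hAmeas]
      _ ≤ ENNReal.ofReal (1 - c) * 1 := by
          exact mul_le_mul_right (prob_le_one) _
      _ = ENNReal.ofReal (1 - c) := mul_one _
  have := ENNReal.toReal_mono (by simp) hsum
  rw [ENNReal.toReal_ofReal (by linarith [hc01.2])] at this
  refine this.trans (le_of_eq ?_)
  rw [hc]
  field_simp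
  ring
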